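/- arXiv:2501.02572 — 3 statements merged into one kernel-verified Lean document; each statement's English description precedes it below -/
import Mathlib

section
/- Let n ≥ 1 and let w : Fin n → ℝ be nonnegative weights (w i ≥ 0), let u : Fin n → ℝ be nonnegative upper bounds (u i ≥ 0), and let F > 0 be a budget with F ≤ ∑ i, u i. Suppose w is sorted in decreasing order: i ≤ j → w j ≤ w i. Let K be the index (K < n) satisfying the threshold condition ∑_{i<K} u i < F ≤ ∑_{i<K+1} u i. Define x* by x* i = u i for i < K, x* K = F − ∑_{i < K} u i, and x* i = 0 for i > K. Then x* maximizes ∑ i, w i * x i over all x with 0 ≤ x i ≤ u i for all i and ∑ i, x i ≤ F. -/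
open Finset

/-- Greedy allocation optimality: with nonnegative decreasing weights `w`,
box constraints `[0, u i]` and budget `F` with
`∑_{i<K} u i < F ≤ ∑_{i≤K} u i`, the greedy point `x*` (fill boxes in order
of decreasing weight, put the remaining budget at index `K`, zero afterwards)
maximizes `∑ i, w i * x i` over all feasible `x`. -/
theorem greedy_allocation_maximizes
    (n : ℕ) (hn : 1 ≤ n) (w u : Fin n → ℝ)
    (hw : ∀ i, 0 ≤ w i) (hu : ∀ i, 0 ≤ u i)
    (F : ℝ) (hF : 0 < F) (hFle : F ≤ ∑ i, u i)
    (hsorted : ∀ i j : Fin n, i ≤ j → w j ≤ w i)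
    (K : Fin n)
    (hK1 : ∑ i ∈ univ.filter (fun i => i < K), u i < F)
    (hK2 : F ≤ ∑ i ∈ univ.filter (fun i => i ≤ K), u i)
    (xstar : Fin n → ℝ)
    (hxstar : ∀ i, xstar i =
      if i < K then u i
      else if i = K then F - ∑ j ∈ univ.filter (fun j => j < K), u j
      else 0) :
    ∀ x : Fin n → ℝ, (∀ i, 0 ≤ x i) → (∀ i, x i ≤ u i) → (∑ i, x i ≤ F) →
      ∑ i, w i * x i ≤ ∑ i, w i * xstar i := by
  intro x hx0 hxu hxF
  -- total of xstar is F
  have hsum : ∑ i, xstar i = F := by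
    rw [← Finset.sum_filter_add_sum_filter_not univ (fun i => i < K)]
    have h1 : ∑ i ∈ univ.filter (fun i => i < K), xstar i
        = ∑ i ∈ univ.filter (fun i => i < K), u i := by
      apply Finset.sum_congr rfl
      intro i hi
      simp only [Finset.mem_filter] at hi
      rw [hxstar i, if_pos hi.2]
    have h2 : ∑ i ∈ univ.filter (fun i => ¬ i < K), xstar i
        = F - ∑ j ∈ univ.filter (fun j => j < K), u j := by
      have : ∀ i ∈ univ.filter (fun i => ¬ i < K), xstar i
          = if i = K then F - ∑ j ∈ univ.filter (fun j => j < K), u j else 0 := by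
        intro i hi
        simp only [Finset.mem_filter] at hi
        rw [hxstar i, if_neg hi.2]
      rw [Finset.sum_congr rfl this, Finset.sum_ite_eq' _ K]
      rw [if_pos (by simp [lt_irrefl])]
    rw [h1, h2]; ring
  -- key termwise inequality
  have key : ∀ i, w K * (xstar i - x i) ≤ w i * (xstar i - x i) := by
    intro i
    rcases lt_trichotomy i K with h | h | h
    · have hd : 0 ≤ xstar i - x i := by
        rw [hxstar i, if_pos h]; linarith [hxu i]
      exact mul_le_mul_of_nonneg_right (hsorted i K h.le) hd
    · rw [h]
    · have hd : xstar i - x i ≤ 0 := by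
        rw [hxstar i, if_neg (not_lt.mpr h.le), if_neg (ne_of_gt h)]
        linarith [hx0 i]
      exact mul_le_mul_of_nonpos_right (hsorted K i h.le) hd
  have hsum2 : ∑ i, w K * (xstar i - x i) ≤ ∑ i, w i * (xstar i - x i) :=
    Finset.sum_le_sum fun i _ => key i
  have e1 : ∑ i, w K * (xstar i - x i) = w K * (F - ∑ i, x i) := by
    rw [← Finset.mul_sum, Finset.sum_sub_distrib, hsum]
  have e2 : ∑ i, w i * (xstar i - x i) = ∑ i, w i * xstar i - ∑ i, w i * x i := by
    rw [← Finset.sum_sub_distrib]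
    exact Finset.sum_congr rfl fun i _ => by ring
  have h0 : 0 ≤ w K * (F - ∑ i, x i) :=
    mul_nonneg (hw K) (by linarith)
  rw [e1, e2] at hsum2
  linarith
end

section
/- Under the setting of the greedy allocation problem (weights w decreasing, box constraints [0, u i], budget F with ∑_{i<K} u i < F ≤ ∑_{i≤K} u i), any feasible x satisfies ∑ i, w i * x i ≤ ∑_{i<K} w i * u i + w K * (F − ∑_{i<K} u i). -/
open Finset

/-- Optimal-value upper bound for the greedy allocation problem: any feasible `x`
(with `0 ≤ x i ≤ u i` and `∑ x i ≤ F`) satisfies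
`∑ i, w i * x i ≤ ∑_{i<K} w i * u i + w K * (F − ∑_{i<K} u i)`. -/
theorem greedy_allocation_value_bound
    (n : ℕ) (hn : 1 ≤ n) (w u : Fin n → ℝ)
    (hw : ∀ i, 0 ≤ w i) (hu : ∀ i, 0 ≤ u i)
    (F : ℝ) (hF : 0 < F)
    (hsorted : ∀ i j : Fin n, i ≤ j → w j ≤ w i)
    (K : Fin n)
    (hK1 : ∑ i ∈ univ.filter (fun i => i < K), u i < F)
    (hK2 : F ≤ ∑ i ∈ univ.filter (fun i => i < K), u i + u K) :
    ∀ x : Fin n → ℝ, (∀ i, 0 ≤ x i) → (∀ i, x i ≤ u i) → (∑ i, x i ≤ F) →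
      ∑ i, w i * x i ≤
        (∑ i ∈ univ.filter (fun i => i < K), w i * u i) +
          w K * (F - ∑ i ∈ univ.filter (fun i => i < K), u i) := by
  intro x hx0 hxu hxF
  have h1 : ∑ i, w i * x i = (∑ i, (w i - w K) * x i) + w K * (∑ i, x i) := by
    rw [Finset.mul_sum, ← Finset.sum_add_distrib]
    congr 1; ext i; ring
  have h2 : ∑ i, (w i - w K) * x i ≤
      ∑ i ∈ univ.filter (fun i => i < K), (w i - w K) * u i := by
    rw [← Finset.sum_filter_add_sum_filter_not univ (fun i => i < K)
      (fun i => (w i - w K) * x i)]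
    have hb : ∑ i ∈ univ.filter (fun i => ¬ i < K), (w i - w K) * x i ≤ 0 := by
      apply Finset.sum_nonpos
      intro i hi
      simp only [mem_filter] at hi
      have : w i ≤ w K := hsorted K i (le_of_not_gt hi.2)
      exact mul_nonpos_of_nonpos_of_nonneg (by linarith) (hx0 i)
    have ha : ∑ i ∈ univ.filter (fun i => i < K), (w i - w K) * x i ≤
        ∑ i ∈ univ.filter (fun i => i < K), (w i - w K) * u i := by
      apply Finset.sum_le_sum
      intro i hi
      simp only [mem_filter] at hi
      have : w K ≤ w i := hsorted i K (le_of_lt hi.2)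
      exact mul_le_mul_of_nonneg_left (hxu i) (by linarith)
    linarith
  have h3 : w K * (∑ i, x i) ≤ w K * F := mul_le_mul_of_nonneg_left hxF (hw K)
  have h4 : ∑ i ∈ univ.filter (fun i => i < K), (w i - w K) * u i =
      (∑ i ∈ univ.filter (fun i => i < K), w i * u i)
        - w K * ∑ i ∈ univ.filter (fun i => i < K), u i := by
    rw [Finset.mul_sum, ← Finset.sum_sub_distrib]
    congr 1; ext i; ring
  linarith
end

section
/- For the two-queue allocation problem: minimize −f₁τQ₁ − f₂τQ₂ + Uτδ(f₁+f₂)³ subject to f₁, f₂ ≥ 0, f₁ + f₂ ≤ F, with Q₁ > Q₂ ≥ 0. Then every optimal solution satisfies f₂* = 0 or f₁* equals its natural cap; specifically, if there are no per-queue caps, then there is an optimal solution with f₂* = 0 and f₁* = min(F, √(Q₁/(3Uδ))). -/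
/-- Two-queue local computing subproblem: minimizing
`−f₁τQ₁ − f₂τQ₂ + Uτδ(f₁+f₂)³` over `f₁, f₂ ≥ 0`, `f₁ + f₂ ≤ F` with
`Q₁ > Q₂ ≥ 0` admits an optimal solution with `f₂* = 0` and
`f₁* = min F √(Q₁/(3Uδ))`. -/
theorem two_queue_local_computing_opt
    (τ δ U F Q₁ Q₂ : ℝ)
    (hτ : 0 < τ) (hδ : 0 < δ) (hU : 0 < U) (hF : 0 < F)
    (hQ : Q₁ > Q₂) (hQ₂ : 0 ≤ Q₂) :
    let g : ℝ → ℝ → ℝ := fun f₁ f₂ => -f₁ * τ * Q₁ - f₂ * τ * Q₂ + U * τ * δ * (f₁ + f₂) ^ 3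
    ∃ f₁star f₂star : ℝ,
      (0 ≤ f₁star ∧ 0 ≤ f₂star ∧ f₁star + f₂star ≤ F) ∧
      (∀ f₁ f₂ : ℝ, 0 ≤ f₁ → 0 ≤ f₂ → f₁ + f₂ ≤ F → g f₁star f₂star ≤ g f₁ f₂) ∧
      f₂star = 0 ∧ f₁star = min F (Real.sqrt (Q₁ / (3 * U * δ))) := by
  intro g
  set c := Real.sqrt (Q₁ / (3 * U * δ)) with hc
  have hQ₁ : 0 < Q₁ := lt_of_le_of_lt hQ₂ hQ
  have hc0 : 0 ≤ c := Real.sqrt_nonneg _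
  have hc2 : 3 * U * δ * c ^ 2 = Q₁ := by
    rw [hc, Real.sq_sqrt (by positivity)]
    field_simp
  refine ⟨min F c, 0, ⟨le_min hF.le hc0, le_refl 0, by simp⟩, ?_, rfl, rfl⟩
  intro f₁ f₂ h1 h2 h3
  simp only [g]
  have hs0 : 0 ≤ f₁ + f₂ := by linarith
  -- reduce to 1-D: g f₁ f₂ ≥ h(f₁+f₂) where h s = -s τ Q₁ + U τ δ s³
  have hred : -(f₁ + f₂) * τ * Q₁ - 0 * τ * Q₂ + U * τ * δ * (f₁ + f₂ + 0) ^ 3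
      ≤ -f₁ * τ * Q₁ - f₂ * τ * Q₂ + U * τ * δ * (f₁ + f₂) ^ 3 := by
    have : 0 ≤ f₂ * τ * (Q₁ - Q₂) :=
      mul_nonneg (mul_nonneg h2 hτ.le) (by linarith)
    nlinarith
  refine le_trans ?_ hred
  set s := f₁ + f₂ with hsdef
  -- 1-D comparison, first without τ
  have key : U * δ * (min F c) ^ 3 - Q₁ * (min F c) ≤ U * δ * s ^ 3 - Q₁ * s := by
    rcases le_total F c with hFc | hFc
    · rw [min_eq_left hFc]
      have hin : 0 ≤ 3 * c ^ 2 - F ^ 2 - F * s - s ^ 2 := by nlinarith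
      have hA : 0 ≤ (F - s) * (3 * c ^ 2 - F ^ 2 - F * s - s ^ 2) :=
        mul_nonneg (by linarith) hin
      nlinarith [mul_nonneg (mul_pos hU hδ).le hA]
    · rw [min_eq_right hFc]
      have hA : 0 ≤ (c - s) ^ 2 * (s + 2 * c) :=
        mul_nonneg (sq_nonneg _) (by linarith)
      nlinarith [mul_nonneg (mul_pos hU hδ).le hA]
  have := mul_le_mul_of_nonneg_left key hτ.le
  nlinarith [this]
end
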